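/- If an equational theory A is regular (every axiom u = v satisfies Var(u) = Var(v)), then any critical pair / derived rule produced by superposition is also regular: given rules l = r and g = d with Var(l) = Var(r) and Var(g) = Var(d), and a unifier σ of g with a non-variable subterm l|_p of l, the derived equation lσ[p ← dσ] = rσ satisfies Var(lσ[p ← dσ]) = Var(rσ). -/

import Mathlib

inductive Term (F V : Type) : Type where
  | var : V → Term F V
  | func : F → List (Term F V) → Term F V

namespace Term

variable {F V : Type}

mutual
  def subst (σ : V → Term F V) : Term F V → Term F V
    | .var v => σ v
    | .func f ts => .func f (substList σ ts)
  def substList (σ : V → Term F V) : List (Term F V) → List (Term F V)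
    | [] => []
    | t :: ts => subst σ t :: substList σ ts
end

inductive Occurs (v : V) : Term F V → Prop where
  | var : Occurs v (.var v)
  | func {f : F} {ts : List (Term F V)} {t : Term F V} :
      t ∈ ts → Occurs v t → Occurs v (.func f ts)

/-- The subterm of `t` at position `p` (a list of argument indices), if any. -/
def subtermAt : Term F V → List ℕ → Option (Term F V)
  | t, [] => some t
  | .var _, _ :: _ => none
  | .func _ ts, i :: p =>
      match ts[i]? with
      | some u => subtermAt u p
      | none => none

mutual
  /-- Replace the subterm of `t` at position `p` by `s`. -/
  def replaceAt : Term F V → List ℕ → Term F V → Term F V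
    | _, [], s => s
    | .var v, _ :: _, _ => .var v
    | .func f ts, i :: p, s => .func f (replaceList ts i p s)
  def replaceList : List (Term F V) → ℕ → List ℕ → Term F V → List (Term F V)
    | [], _, _, _ => []
    | t :: ts, 0, p, s => replaceAt t p s :: ts
    | t :: ts, n + 1, p, s => t :: replaceList ts n p s
end

/-- `t` is a variable. -/
def isVar : Term F V → Prop
  | .var _ => True
  | .func _ _ => False

end Term

namespace TermAux

open Term

variable {F V : Type}

theorem substList_eq_map (σ : V → Term F V) :
    ∀ ts : List (Term F V), Term.substList σ ts = ts.map (Term.subst σ)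
  | [] => rfl
  | t :: ts => by rw [Term.substList, List.map_cons, substList_eq_map]

theorem occ_subst_bwd {σ : V → Term F V} {v w : V} :
    ∀ {t : Term F V}, Term.Occurs w t → Term.Occurs v (σ w) →
      Term.Occurs v (Term.subst σ t) := by
  intro t hw hv
  induction hw with
  | var => simpa [Term.subst] using hv
  | func hmem hocc ih =>
      rw [Term.subst, substList_eq_map]
      exact .func (List.mem_map_of_mem hmem) ih

theorem occ_subst_fwd {σ : V → Term F V} {v : V} :
    ∀ t : Term F V, Term.Occurs v (Term.subst σ t) →
      ∃ w, Term.Occurs w t ∧ Term.Occurs v (σ w)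
  | .var x, h => ⟨x, .var, by simpa [Term.subst] using h⟩
  | .func f ts, h => by
      rw [Term.subst, substList_eq_map] at h
      cases h with
      | func hmem hocc =>
        rw [List.mem_map] at hmem
        obtain ⟨u, hu, rfl⟩ := hmem
        obtain ⟨w, hw, hv⟩ := occ_subst_fwd u hocc
        exact ⟨w, .func hu hw, hv⟩
termination_by t => sizeOf t
decreasing_by
  have := List.sizeOf_lt_of_mem hu
  simp only [Term.func.sizeOf_spec]
  omega

theorem occ_subst_iff {σ : V → Term F V} {v : V} {t : Term F V} :
    Term.Occurs v (Term.subst σ t) ↔ ∃ w, Term.Occurs w t ∧ Term.Occurs v (σ w) :=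
  ⟨occ_subst_fwd t, fun ⟨_, hw, hv⟩ => occ_subst_bwd hw hv⟩

theorem subtermAt_subst {σ : V → Term F V} :
    ∀ (p : List ℕ) (t u : Term F V), Term.subtermAt t p = some u →
      Term.subtermAt (Term.subst σ t) p = some (Term.subst σ u)
  | [], t, u, h => by
      rw [Term.subtermAt] at h; cases h; rw [Term.subtermAt]
  | i :: p, .var x, u, h => by simp [Term.subtermAt] at h
  | i :: p, .func f ts, u, h => by
      rw [Term.subtermAt] at h
      rcases hg : ts[i]? with _ | w
      · rw [hg] at h; simp at h
      · rw [hg] at h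
        rw [Term.subst, Term.subtermAt, substList_eq_map, List.getElem?_map, hg]
        exact subtermAt_subst p w u h

theorem replaceList_eq_set :
    ∀ (ts : List (Term F V)) (i : ℕ) (w : Term F V), ts[i]? = some w →
      ∀ (p : List ℕ) (s : Term F V),
        Term.replaceList ts i p s = ts.set i (Term.replaceAt w p s)
  | [], i, w, h => by simp at h
  | t :: ts, 0, w, h => by
      simp at h; subst h
      intro p s; rw [Term.replaceList]; rfl
  | t :: ts, n + 1, w, h => by
      intro p s
      rw [Term.replaceList, replaceList_eq_set ts n w h p s]; rfl

theorem occ_subterm {v : V} :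
    ∀ (p : List ℕ) (t u : Term F V), Term.subtermAt t p = some u →
      Term.Occurs v u → Term.Occurs v t
  | [], t, u, h => by rw [Term.subtermAt] at h; cases h; exact id
  | i :: p, .var x, u, h => by simp [Term.subtermAt] at h
  | i :: p, .func f ts, u, h => by
      rw [Term.subtermAt] at h
      rcases hg : ts[i]? with _ | w
      · rw [hg] at h; simp at h
      · rw [hg] at h
        intro hv
        exact .func (List.mem_of_getElem? hg) (occ_subterm p w u h hv)

theorem mem_replaceList {s : Term F V} :
    ∀ (ts : List (Term F V)) (i : ℕ) (p : List ℕ) (t' : Term F V),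
      t' ∈ Term.replaceList ts i p s →
      t' ∈ ts ∨ ∃ u ∈ ts, t' = Term.replaceAt u p s
  | [], i, p, t', h => by rw [Term.replaceList] at h; simp at h
  | t :: ts, 0, p, t', h => by
      rw [Term.replaceList] at h
      rcases List.mem_cons.1 h with h | h
      · exact Or.inr ⟨t, List.mem_cons_self .., h⟩
      · exact Or.inl (List.mem_cons_of_mem _ h)
  | t :: ts, n + 1, p, t', h => by
      rw [Term.replaceList] at h
      rcases List.mem_cons.1 h with h | h
      · exact Or.inl (h ▸ List.mem_cons_self ..)
      · rcases mem_replaceList ts n p t' h with h | ⟨u, hu, he⟩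
        · exact Or.inl (List.mem_cons_of_mem _ h)
        · exact Or.inr ⟨u, List.mem_cons_of_mem _ hu, he⟩

theorem occ_replace_fwd {v : V} {s : Term F V} :
    ∀ (p : List ℕ) (t : Term F V), Term.Occurs v (Term.replaceAt t p s) →
      Term.Occurs v t ∨ Term.Occurs v s
  | [], t, h => by rw [Term.replaceAt] at h; exact Or.inr h
  | i :: p, .var x, h => by rw [Term.replaceAt] at h; exact Or.inl h
  | i :: p, .func f ts, h => by
      rw [Term.replaceAt] at h
      cases h with
      | func hmem hocc =>
        rcases mem_replaceList ts i p _ hmem with hm | ⟨u, hu, rfl⟩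
        · exact Or.inl (.func hm hocc)
        · rcases occ_replace_fwd p u hocc with h | h
          · exact Or.inl (.func hu h)
          · exact Or.inr h
termination_by p => p.length

theorem occ_replace_of_occ_s {v : V} {s : Term F V} :
    ∀ (p : List ℕ) (t u : Term F V), Term.subtermAt t p = some u →
      Term.Occurs v s → Term.Occurs v (Term.replaceAt t p s)
  | [], t, u, h, hv => by rw [Term.replaceAt]; exact hv
  | i :: p, .var x, u, h, hv => by simp [Term.subtermAt] at h
  | i :: p, .func f ts, u, h, hv => by
      rw [Term.subtermAt] at h
      rcases hg : ts[i]? with _ | w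
      · rw [hg] at h; simp at h
      · rw [hg] at h
        rw [Term.replaceAt, replaceList_eq_set ts i w hg p s]
        have hlen : i < ts.length := (List.getElem?_eq_some_iff.1 hg).1
        have hmem : Term.replaceAt w p s ∈ ts.set i (Term.replaceAt w p s) :=
          List.mem_of_getElem? (List.getElem?_set_self hlen)
        exact .func hmem (occ_replace_of_occ_s p w u h hv)

theorem occ_replace_bwd {v : V} {s : Term F V} :
    ∀ (p : List ℕ) (t u : Term F V), Term.subtermAt t p = some u →
      Term.Occurs v t →
      Term.Occurs v (Term.replaceAt t p s) ∨ Term.Occurs v u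
  | [], t, u, h, hv => by rw [Term.subtermAt] at h; cases h; exact Or.inr hv
  | i :: p, .var x, u, h, hv => by simp [Term.subtermAt] at h
  | i :: p, .func f ts, u, h, hv => by
      rw [Term.subtermAt] at h
      rcases hg : ts[i]? with _ | w
      · rw [hg] at h; simp at h
      · rw [hg] at h
        have hlen : i < ts.length := (List.getElem?_eq_some_iff.1 hg).1
        rw [Term.replaceAt, replaceList_eq_set ts i w hg p s]
        cases hv with
        | @func _ _ a hmem hocc =>
          obtain ⟨j, hj⟩ := List.mem_iff_getElem?.1 hmem
          by_cases hji : j = i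
          · subst hji
            rw [hg] at hj
            have hea : a = w := (Option.some.inj hj).symm
            subst hea
            rcases occ_replace_bwd p a u h hocc with ho | ho
            · have hmem' : Term.replaceAt a p s ∈ ts.set j (Term.replaceAt a p s) :=
                List.mem_of_getElem? (List.getElem?_set_self hlen)
              exact Or.inl (.func hmem' ho)
            · exact Or.inr ho
          · have hmem' : a ∈ ts.set i (Term.replaceAt w p s) :=
              List.mem_of_getElem? (by rw [List.getElem?_set_ne (Ne.symm hji)]; exact hj)
            exact Or.inl (.func hmem' hocc)
termination_by p => p.length

end TermAux


/-- Regularity is preserved by superposition: given rules `l = r`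
and `g = d` with `Var(l) = Var(r)` and `Var(g) = Var(d)`, and a unifier `σ` of
`g` with a non-variable subterm `l|_p` of `l`, the derived equation
`lσ[p ← dσ] = rσ` is again regular: `Var(lσ[p ← dσ]) = Var(rσ)`. -/
theorem regularity_preserved_by_superposition
    (F V : Type) (l r g d : Term F V)
    (hlr : ∀ v : V, Term.Occurs v l ↔ Term.Occurs v r)
    (hgd : ∀ v : V, Term.Occurs v g ↔ Term.Occurs v d)
    (p : List ℕ) (lp : Term F V)
    (hp : Term.subtermAt l p = some lp)
    (hnv : ¬ Term.isVar lp)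
    (σ : V → Term F V)
    (hunif : Term.subst σ g = Term.subst σ lp) :
    ∀ v : V,
      Term.Occurs v (Term.replaceAt (Term.subst σ l) p (Term.subst σ d)) ↔
        Term.Occurs v (Term.subst σ r) := by
  intro v
  have hvar : ∀ (a b : Term F V), (∀ w, Term.Occurs w a ↔ Term.Occurs w b) →
      ∀ u, Term.Occurs u (Term.subst σ a) ↔ Term.Occurs u (Term.subst σ b) := by
    intro a b hab u
    simp only [TermAux.occ_subst_iff]
    exact exists_congr fun w => and_congr_left' (hab w)
  have hVlp : ∀ u, Term.Occurs u (Term.subst σ d) ↔ Term.Occurs u (Term.subst σ lp) := by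
    intro u
    rw [← hunif]
    exact (hvar g d hgd u).symm
  have hVr : ∀ u, Term.Occurs u (Term.subst σ r) ↔ Term.Occurs u (Term.subst σ l) :=
    fun u => (hvar l r hlr u).symm
  have hsub : Term.subtermAt (Term.subst σ l) p = some (Term.subst σ lp) :=
    TermAux.subtermAt_subst p l lp hp
  constructor
  · intro h
    rcases TermAux.occ_replace_fwd p _ h with h | h
    · exact (hVr v).2 h
    · exact (hVr v).2 (TermAux.occ_subterm p _ _ hsub ((hVlp v).1 h))
  · intro h
    rcases TermAux.occ_replace_bwd p _ _ hsub ((hVr v).1 h) with h' | h'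
    · exact h'
    · exact TermAux.occ_replace_of_occ_s p _ _ hsub ((hVlp v).2 h')
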